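/- arXiv:2106.07668 — 2 statements merged into one kernel-verified Lean document; each statement's English description precedes it below -/
import Mathlib

section
/- More generally, if ρ = Σ_j p_j ρ_{A B_L^j} ⊗ ρ_{B_R^j C} with probabilities p_j, where H_B = ⊕_j H_{B_L^j} ⊗ H_{B_R^j} is a direct-sum decomposition, then E_{A:BC}(ρ) = E_{A:B}(Tr_C ρ). -/
open scoped ComplexOrder

/-- Trace norm `‖X‖₁ = Tr √(X†X)`, as the sum of the singular values of `X`. -/
noncomputable def traceNorm {n : Type*} [Fintype n] [DecidableEq n]
    (X : Matrix n n ℂ) : ℝ :=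
  ∑ i, Real.sqrt ((Matrix.isHermitian_conjTranspose_mul_self X).eigenvalues i)

/-- Partial transpose with respect to the first tensor factor. -/
def ptA {α β : Type*} (X : Matrix (α × β) (α × β) ℂ) : Matrix (α × β) (α × β) ℂ :=
  Matrix.of fun p q => X (q.1, p.2) (p.1, q.2)

/-- Partial trace over the last tensor factor `C`. -/
noncomputable def traceOutC {α β γ : Type*} [Fintype γ]
    (X : Matrix (α × β × γ) (α × β × γ) ℂ) : Matrix (α × β) (α × β) ℂ :=
  Matrix.of fun p q => ∑ c, X (p.1, p.2, c) (q.1, q.2, c)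

/-- The entanglement negativity `E_{A:rest} = log ‖ρ^{T_A}‖₁`. -/
noncomputable def negE {α β : Type*} [Fintype α] [Fintype β] [DecidableEq α] [DecidableEq β]
    (ρ : Matrix (α × β) (α × β) ℂ) : ℝ :=
  Real.log (traceNorm (ptA ρ))

/-- A density matrix: positive semidefinite with unit trace. -/
def IsDensityMatrix {n : Type*} [Fintype n] [DecidableEq n] (ρ : Matrix n n ℂ) : Prop :=
  ρ.PosSemidef ∧ ρ.trace = 1

/-!
After reindexing `A × B × C` as `Σ j, (A × B_L^j) × (B_R^j × C)`, the partial transpose `ρ^{T_A}` is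
block diagonal with blocks `p_j ρ_{AB_L^j}^{T_A} ⊗ ρ_{B_R^j C}`, and likewise `(Tr_C ρ)^{T_A}` has
blocks `p_j ρ_{AB_L^j}^{T_A} ⊗ Tr_C ρ_{B_R^j C}`. A Hermitian matrix `U diag(d) U†` with `U` unitary
has trace norm `∑ |d i|`, because `X†X = U diag(d²) U†` has the same characteristic polynomial as
`diag(d²)`. Block sums, Kronecker products and real multiples of Hermitian matrices are again of
this form, so the trace norm is additive over blocks, multiplicative over tensor factors and
homogeneous. Since `ρ_{B_R^j C}` and its partial trace are density matrices, both have trace norm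
`1`, so both sides equal `log ∑ |p_j| ‖ρ_{AB_L^j}^{T_A}‖₁`.
-/

section

open Matrix Polynomial
open scoped Kronecker

variable {n m : Type*} [Fintype n] [DecidableEq n] [Fintype m]

lemma Matrix.IsHermitian.sum_comp_eigenvalues_eq_of_charpoly_eq {A : Matrix n n ℂ}
    (hA : A.IsHermitian) {s : m → ℝ} (h : A.charpoly = ∏ i, (X - C (s i : ℂ))) (f : ℝ → ℝ) :
    ∑ i, f (hA.eigenvalues i) = ∑ i, f (s i) := by
  have hroots : Finset.univ.val.map (fun i => (hA.eigenvalues i : ℂ))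
      = Finset.univ.val.map (fun i => (s i : ℂ)) := by
    have := hA.roots_charpoly_eq_eigenvalues
    rw [h, Polynomial.roots_prod _ _ (Finset.prod_ne_zero_iff.mpr fun i _ => X_sub_C_ne_zero _)]
      at this
    simpa [Function.comp_def] using this.symm
  simpa [Multiset.map_map, Function.comp_def] using
    congrArg (fun S : Multiset ℂ => (S.map fun z => f z.re).sum) hroots

lemma traceNorm_unitary_mul_diagonal_mul_star {U : Matrix n n ℂ} (hU : U ∈ unitaryGroup n ℂ)
    (d : n → ℝ) : traceNorm (U * diagonal (fun i => (d i : ℂ)) * star U) = ∑ i, |d i| := by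
  set M := U * diagonal (fun i => (d i : ℂ)) * star U
  have hMM : Mᴴ * M = U * diagonal (fun i => ((d i ^ 2 : ℝ) : ℂ)) * star U := by
    have hD : star (diagonal fun i => (d i : ℂ)) = diagonal fun i => (d i : ℂ) := by
      simp [star_eq_conjTranspose, diagonal_conjTranspose, Pi.star_def]
    rw [← star_eq_conjTranspose, star_mul, star_mul, star_star, hD]
    simp only [M, mul_assoc, ← mul_assoc (star U) U, Unitary.star_mul_self_of_mem hU, one_mul,
      ← mul_assoc (diagonal _), diagonal_mul_diagonal]
    push_cast
    simp [sq]
  have hchar : (Mᴴ * M).charpoly = ∏ i, (X - C ((d i ^ 2 : ℝ) : ℂ)) := by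
    rw [hMM, charpoly_mul_comm, ← mul_assoc, Unitary.star_mul_self_of_mem hU, one_mul,
      charpoly_diagonal]
  rw [traceNorm, IsHermitian.sum_comp_eigenvalues_eq_of_charpoly_eq _ hchar]
  simp [Real.sqrt_sq_eq_abs]

lemma Matrix.IsHermitian.traceNorm_eq_sum_abs_eigenvalues {A : Matrix n n ℂ} (hA : A.IsHermitian) :
    traceNorm A = ∑ i, |hA.eigenvalues i| := by
  conv_lhs => rw [hA.spectral_theorem, Unitary.conjStarAlgAut_apply]
  exact traceNorm_unitary_mul_diagonal_mul_star hA.eigenvectorUnitary.2 _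

lemma Matrix.IsHermitian.traceNorm_ofReal_smul {A : Matrix n n ℂ} (hA : A.IsHermitian) (c : ℝ) :
    traceNorm ((c : ℂ) • A) = |c| * traceNorm A := by
  set U := (hA.eigenvectorUnitary : Matrix n n ℂ)
  have hcA : (c : ℂ) • A = U * diagonal (fun i => ((c * hA.eigenvalues i : ℝ) : ℂ)) * star U := by
    conv_lhs => rw [hA.spectral_theorem, Unitary.conjStarAlgAut_apply]
    rw [← Matrix.smul_mul, ← Matrix.mul_smul, ← diagonal_smul]
    congr 3
    ext i
    simp
  rw [hcA, traceNorm_unitary_mul_diagonal_mul_star hA.eigenvectorUnitary.2,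
    hA.traceNorm_eq_sum_abs_eigenvalues, Finset.mul_sum]
  simp [abs_mul]

lemma Matrix.IsHermitian.traceNorm_kronecker [DecidableEq m] {A : Matrix n n ℂ}
    {B : Matrix m m ℂ} (hA : A.IsHermitian) (hB : B.IsHermitian) :
    traceNorm (A ⊗ₖ B) = traceNorm A * traceNorm B := by
  set U := (hA.eigenvectorUnitary : Matrix n n ℂ) ⊗ₖ (hB.eigenvectorUnitary : Matrix m m ℂ)
  have hU : U ∈ unitaryGroup (n × m) ℂ :=
    kronecker_mem_unitary hA.eigenvectorUnitary.2 hB.eigenvectorUnitary.2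
  have hAB : A ⊗ₖ B
      = U * diagonal (fun p => ((hA.eigenvalues p.1 * hB.eigenvalues p.2 : ℝ) : ℂ)) * star U := by
    conv_lhs => rw [hA.spectral_theorem, hB.spectral_theorem]
    simp [U, Unitary.conjStarAlgAut_apply, mul_kronecker_mul, star_eq_conjTranspose,
      conjTranspose_kronecker, diagonal_kronecker_diagonal, Function.comp_def]
  rw [hAB, traceNorm_unitary_mul_diagonal_mul_star hU, hA.traceNorm_eq_sum_abs_eigenvalues,
    hB.traceNorm_eq_sum_abs_eigenvalues, Fintype.sum_prod_type, Finset.sum_mul_sum]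
  simp [abs_mul]

lemma traceNorm_submatrix_equiv [DecidableEq m] (A : Matrix n n ℂ) (e : m ≃ n) :
    traceNorm (A.submatrix e e) = traceNorm A := by
  have hchar : ((A.submatrix e e)ᴴ * A.submatrix e e).charpoly
      = ∏ i, (X - C ((isHermitian_conjTranspose_mul_self A).eigenvalues i : ℂ)) := by
    rw [conjTranspose_submatrix, submatrix_mul_equiv,
      show (Aᴴ * A).submatrix e e = reindex e.symm e.symm (Aᴴ * A) from rfl, charpoly_reindex,
      (isHermitian_conjTranspose_mul_self A).charpoly_eq]
    rfl
  exact IsHermitian.sum_comp_eigenvalues_eq_of_charpoly_eq _ hchar _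

lemma blockDiagonal'_mem_unitaryGroup {J : Type*} [Fintype J] [DecidableEq J] {K : J → Type*}
    [∀ j, Fintype (K j)] [∀ j, DecidableEq (K j)] {U : ∀ j, Matrix (K j) (K j) ℂ}
    (hU : ∀ j, U j ∈ unitaryGroup (K j) ℂ) :
    blockDiagonal' U ∈ unitaryGroup (Σ j, K j) ℂ := by
  have hstar : star (blockDiagonal' U) = blockDiagonal' fun j => star (U j) := by
    simp only [star_eq_conjTranspose, blockDiagonal'_conjTranspose]
  rw [Unitary.mem_iff, hstar, ← blockDiagonal'_mul, ← blockDiagonal'_mul]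
  simp only [Unitary.star_mul_self_of_mem (hU _), Unitary.mul_star_self_of_mem (hU _)]
  exact ⟨blockDiagonal'_one, blockDiagonal'_one⟩

lemma traceNorm_blockDiagonal' {J : Type*} [Fintype J] [DecidableEq J] {K : J → Type*}
    [∀ j, Fintype (K j)] [∀ j, DecidableEq (K j)] {A : ∀ j, Matrix (K j) (K j) ℂ}
    (hA : ∀ j, (A j).IsHermitian) :
    traceNorm (blockDiagonal' A) = ∑ j, traceNorm (A j) := by
  set U := blockDiagonal' fun j => ((hA j).eigenvectorUnitary : Matrix (K j) (K j) ℂ)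
  have hU : U ∈ unitaryGroup _ ℂ :=
    blockDiagonal'_mem_unitaryGroup fun j => (hA j).eigenvectorUnitary.2
  have hblock : blockDiagonal' A
      = U * diagonal (fun s => ((hA s.1).eigenvalues s.2 : ℂ)) * star U := by
    conv_lhs => rw [show A = _ from funext fun j => (hA j).spectral_theorem]
    rw [← blockDiagonal'_diagonal fun j k => ((hA j).eigenvalues k : ℂ)]
    simp only [U, Unitary.conjStarAlgAut_apply, star_eq_conjTranspose,
      blockDiagonal'_conjTranspose, ← blockDiagonal'_mul]
    rfl
  rw [hblock, traceNorm_unitary_mul_diagonal_mul_star hU, Fintype.sum_sigma]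
  simp only [(hA _).traceNorm_eq_sum_abs_eigenvalues]

lemma Matrix.IsHermitian.kronecker {k l : Type*} {A : Matrix k k ℂ} {B : Matrix l l ℂ}
    (hA : A.IsHermitian) (hB : B.IsHermitian) : (A ⊗ₖ B).IsHermitian := by
  rw [IsHermitian, conjTranspose_kronecker, hA.eq, hB.eq]

lemma traceNorm_blockDiagonal'_ofReal_smul_kronecker {J : Type*} [Fintype J] [DecidableEq J]
    {K L : J → Type*} [∀ j, Fintype (K j)] [∀ j, DecidableEq (K j)] [∀ j, Fintype (L j)]
    [∀ j, DecidableEq (L j)] (c : J → ℝ) {A : ∀ j, Matrix (K j) (K j) ℂ}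
    {B : ∀ j, Matrix (L j) (L j) ℂ} (hA : ∀ j, (A j).IsHermitian) (hB : ∀ j, (B j).IsHermitian) :
    traceNorm (blockDiagonal' fun j => (c j : ℂ) • (A j ⊗ₖ B j))
      = ∑ j, |c j| * (traceNorm (A j) * traceNorm (B j)) := by
  have hAB j := (hA j).kronecker (hB j)
  rw [traceNorm_blockDiagonal' fun j => (hAB j).smul (by simp [IsSelfAdjoint])]
  simp only [(hAB _).traceNorm_ofReal_smul, (hA _).traceNorm_kronecker (hB _)]

lemma Matrix.IsHermitian.ptA {α β : Type*} {A : Matrix (α × β) (α × β) ℂ} (hA : A.IsHermitian) :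
    (ptA A).IsHermitian := by
  ext p q
  exact hA.apply (q.1, p.2) (p.1, q.2)

lemma IsDensityMatrix.traceNorm_eq_one {ρ : Matrix n n ℂ} (hρ : IsDensityMatrix ρ) :
    traceNorm ρ = 1 := by
  obtain ⟨hpsd, htr⟩ := hρ
  have htrace := hpsd.1.trace_eq_sum_eigenvalues
  rw [htr] at htrace
  rw [hpsd.1.traceNorm_eq_sum_abs_eigenvalues]
  simp only [abs_of_nonneg (hpsd.eigenvalues_nonneg _)]
  simpa using (congrArg Complex.re htrace).symm

/-- Partial trace over the second factor, written as a sum of compressions so that positivity is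
inherited. -/
def traceRight {α γ : Type*} [Fintype γ] (A : Matrix (α × γ) (α × γ) ℂ) : Matrix α α ℂ :=
  ∑ c, A.submatrix (fun a => (a, c)) (fun a => (a, c))

lemma traceRight_apply {α γ : Type*} [Fintype γ] (A : Matrix (α × γ) (α × γ) ℂ) (a a' : α) :
    traceRight A a a' = ∑ c, A (a, c) (a', c) := by
  simp [traceRight, Matrix.sum_apply]

lemma IsDensityMatrix.traceRight {γ : Type*} [Fintype γ] [DecidableEq γ]
    {ρ : Matrix (n × γ) (n × γ) ℂ} (hρ : IsDensityMatrix ρ) : IsDensityMatrix (traceRight ρ) := by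
  refine ⟨posSemidef_sum _ fun c _ => hρ.1.submatrix _, ?_⟩
  rw [← hρ.2, trace, trace, Fintype.sum_prod_type]
  simp [diag, traceRight_apply]

section BlockProduct

variable {J A C : Type*} {L R : J → Type*}

def sigmaProdProdEquiv (A C : Type*) (L R : J → Type*) :
    (Σ j, (A × L j) × (R j × C)) ≃ A × (Σ j, L j × R j) × C where
  toFun s := (s.2.1.1, ⟨s.1, s.2.1.2, s.2.2.1⟩, s.2.2.2)
  invFun x := ⟨x.2.1.1, (x.1, x.2.1.2.1), (x.2.1.2.2, x.2.2)⟩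
  left_inv _ := rfl
  right_inv _ := rfl

def sigmaProdEquiv (A : Type*) (L R : J → Type*) :
    (Σ j, (A × L j) × R j) ≃ A × Σ j, L j × R j where
  toFun s := (s.2.1.1, ⟨s.1, s.2.1.2, s.2.2⟩)
  invFun x := ⟨x.2.1, (x.1, x.2.2.1), x.2.2.2⟩
  left_inv _ := rfl
  right_inv _ := rfl

variable [DecidableEq J] (p : J → ℝ)
  (ρ1 : ∀ j, Matrix (A × L j) (A × L j) ℂ) (ρ2 : ∀ j, Matrix (R j × C) (R j × C) ℂ)
  (ρ : Matrix (A × (Σ j, L j × R j) × C) (A × (Σ j, L j × R j) × C) ℂ)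

lemma ptA_submatrix_sigmaProdProdEquiv
    (hoff : ∀ (a a' : A) (c c' : C) (j j' : J) (x : L j × R j) (x' : L j' × R j'),
      j ≠ j' → ρ (a, ⟨j, x⟩, c) (a', ⟨j', x'⟩, c') = 0)
    (hblock : ∀ (a a' : A) (c c' : C) (j : J) (l l' : L j) (r r' : R j),
      ρ (a, ⟨j, (l, r)⟩, c) (a', ⟨j, (l', r')⟩, c')
        = (p j : ℂ) * ρ1 j (a, l) (a', l') * ρ2 j (r, c) (r', c')) :
    (ptA ρ).submatrix (sigmaProdProdEquiv A C L R) (sigmaProdProdEquiv A C L R)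
      = blockDiagonal' fun j => (p j : ℂ) • (ptA (ρ1 j) ⊗ₖ ρ2 j) := by
  ext ⟨j, ⟨a, l⟩, r, c⟩ ⟨j', ⟨a', l'⟩, r', c'⟩
  rcases eq_or_ne j j' with rfl | hj
  · simp [blockDiagonal'_apply_eq, ptA, sigmaProdProdEquiv, hblock, mul_assoc]
  · simp [blockDiagonal'_apply_ne _ _ _ hj, ptA, sigmaProdProdEquiv, hoff _ _ _ _ _ _ _ _ hj]

lemma ptA_traceOutC_submatrix_sigmaProdEquiv [Fintype C]
    (hoff : ∀ (a a' : A) (c c' : C) (j j' : J) (x : L j × R j) (x' : L j' × R j'),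
      j ≠ j' → ρ (a, ⟨j, x⟩, c) (a', ⟨j', x'⟩, c') = 0)
    (hblock : ∀ (a a' : A) (c c' : C) (j : J) (l l' : L j) (r r' : R j),
      ρ (a, ⟨j, (l, r)⟩, c) (a', ⟨j, (l', r')⟩, c')
        = (p j : ℂ) * ρ1 j (a, l) (a', l') * ρ2 j (r, c) (r', c')) :
    (ptA (traceOutC ρ)).submatrix (sigmaProdEquiv A L R) (sigmaProdEquiv A L R)
      = blockDiagonal' fun j => (p j : ℂ) • (ptA (ρ1 j) ⊗ₖ traceRight (ρ2 j)) := by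
  ext ⟨j, ⟨a, l⟩, r⟩ ⟨j', ⟨a', l'⟩, r'⟩
  rcases eq_or_ne j j' with rfl | hj
  · simp [blockDiagonal'_apply_eq, ptA, traceOutC, traceRight_apply, sigmaProdEquiv, hblock,
      Finset.mul_sum, mul_assoc]
  · simp [blockDiagonal'_apply_ne _ _ _ hj, ptA, traceOutC, sigmaProdEquiv,
      hoff _ _ _ _ _ _ _ _ hj]

end BlockProduct

end

theorem stmt_7_general {J A C : Type*} {BL BR : J → Type*}
    [Fintype J] [DecidableEq J] [Fintype A] [Fintype C] [DecidableEq A] [DecidableEq C]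
    [∀ j, Fintype (BL j)] [∀ j, DecidableEq (BL j)]
    [∀ j, Fintype (BR j)] [∀ j, DecidableEq (BR j)]
    (p : J → ℝ)
    (ρ1 : ∀ j, Matrix (A × BL j) (A × BL j) ℂ)
    (ρ2 : ∀ j, Matrix (BR j × C) (BR j × C) ℂ)
    (h1 : ∀ j, IsDensityMatrix (ρ1 j)) (h2 : ∀ j, IsDensityMatrix (ρ2 j))
    (ρ : Matrix (A × (Σ j, BL j × BR j) × C) (A × (Σ j, BL j × BR j) × C) ℂ)
    (hoff : ∀ (a a' : A) (c c' : C) (j j' : J) (x : BL j × BR j) (x' : BL j' × BR j'),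
      j ≠ j' → ρ (a, ⟨j, x⟩, c) (a', ⟨j', x'⟩, c') = 0)
    (hblock : ∀ (a a' : A) (c c' : C) (j : J) (l l' : BL j) (r r' : BR j),
      ρ (a, ⟨j, (l, r)⟩, c) (a', ⟨j, (l', r')⟩, c')
        = (p j : ℂ) * ρ1 j (a, l) (a', l') * ρ2 j (r, c) (r', c')) :
    negE ρ = negE (traceOutC ρ) := by
  have hptA j : (ptA (ρ1 j)).IsHermitian := (h1 j).1.1.ptA
  have hABC : traceNorm (ptA ρ) = ∑ j, |p j| * traceNorm (ptA (ρ1 j)) := by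
    rw [← traceNorm_submatrix_equiv _ (sigmaProdProdEquiv A C BL BR),
      ptA_submatrix_sigmaProdProdEquiv p ρ1 ρ2 ρ hoff hblock,
      traceNorm_blockDiagonal'_ofReal_smul_kronecker p hptA fun j => (h2 j).1.1]
    simp only [(h2 _).traceNorm_eq_one, mul_one]
  have hAB : traceNorm (ptA (traceOutC ρ)) = ∑ j, |p j| * traceNorm (ptA (ρ1 j)) := by
    rw [← traceNorm_submatrix_equiv _ (sigmaProdEquiv A BL BR),
      ptA_traceOutC_submatrix_sigmaProdEquiv p ρ1 ρ2 ρ hoff hblock,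
      traceNorm_blockDiagonal'_ofReal_smul_kronecker p hptA fun j => (h2 j).traceRight.1.1]
    simp only [(h2 _).traceRight.traceNorm_eq_one, mul_one]
  rw [negE, negE, hABC, hAB]

/-- If `ρ = Σ_j p_j ρ_{A B_L^j} ⊗ ρ_{B_R^j C}` with respect to a direct-sum
decomposition `H_B = ⊕_j H_{B_L^j} ⊗ H_{B_R^j}` (here realized as the sigma type
`B = Σ j, BL j × BR j`), then `E_{A:BC}(ρ) = E_{A:B}(Tr_C ρ)`. -/
theorem stmt_7 {J A C : Type*} {BL BR : J → Type*}
    [Fintype J] [DecidableEq J] [Fintype A] [Fintype C] [DecidableEq A] [DecidableEq C]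
    [∀ j, Fintype (BL j)] [∀ j, DecidableEq (BL j)]
    [∀ j, Fintype (BR j)] [∀ j, DecidableEq (BR j)]
    (p : J → ℝ) (hp : ∀ j, 0 ≤ p j) (hp1 : ∑ j, p j = 1)
    (ρ1 : ∀ j, Matrix (A × BL j) (A × BL j) ℂ)
    (ρ2 : ∀ j, Matrix (BR j × C) (BR j × C) ℂ)
    (h1 : ∀ j, IsDensityMatrix (ρ1 j)) (h2 : ∀ j, IsDensityMatrix (ρ2 j))
    (ρ : Matrix (A × (Σ j, BL j × BR j) × C) (A × (Σ j, BL j × BR j) × C) ℂ)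
    (hoff : ∀ (a a' : A) (c c' : C) (j j' : J) (x : BL j × BR j) (x' : BL j' × BR j'),
      j ≠ j' → ρ (a, ⟨j, x⟩, c) (a', ⟨j', x'⟩, c') = 0)
    (hblock : ∀ (a a' : A) (c c' : C) (j : J) (l l' : BL j) (r r' : BR j),
      ρ (a, ⟨j, (l, r)⟩, c) (a', ⟨j, (l', r')⟩, c')
        = (p j : ℂ) * ρ1 j (a, l) (a', l') * ρ2 j (r, c) (r', c')) :
    negE ρ = negE (traceOutC ρ) :=
  stmt_7_general p ρ1 ρ2 h1 h2 ρ hoff hblock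
end

section
/- Let ρ be a density matrix on H_A ⊗ H_B of the block-diagonal form ρ = ⊕_a |ψ_a|² ρ_a, where the blocks are orthogonal and each ρ_a is a density matrix on a subspace of the form H_A^a ⊗ H_B^a. Then ‖ρ^{T_A}‖₁ = Σ_a |ψ_a|² ‖ρ_a^{T_A}‖₁, so E_{A:B}(ρ) = log Σ_a |ψ_a|² exp(E_{A:B}(ρ_a)). -/
open scoped ComplexOrder

/-!
The trace norm is `‖X‖₁ = Tr S` for the positive square root `S` of `Xᴴ X`; exhibiting such
an `S` shows that `‖·‖₁` is invariant under reindexing, additive on block-diagonal matrices and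
absolutely homogeneous. After partial transposition the row index `((a, x), (b, y))` pairs the
`A`-sector `a` with the `B`-sector `b`, so, reindexed by `Σ (a, b), H_A^a × H_B^b`, the matrix
`ρ^{T_A}` is block diagonal over `I × I`: the block `(a, a)` is `|ψ_a|² ρ_a^{T_A}` and the blocks
`(a, b)` with `a ≠ b` vanish. Since `ρ_a^{T_A}` has trace one, `‖ρ_a^{T_A}‖₁ > 0`, which gives the
logarithmic form.
-/

open Matrix
open scoped MatrixOrder

lemma Matrix.trace_submatrix_equiv {m n R : Type*} [Fintype m] [Fintype n] [AddCommMonoid R]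
    (A : Matrix n n R) (e : m ≃ n) : (A.submatrix e e).trace = A.trace :=
  e.sum_comp A.diag

lemma trace_ptA {α β : Type*} [Fintype α] [Fintype β] (X : Matrix (α × β) (α × β) ℂ) :
    (ptA X).trace = X.trace :=
  rfl

lemma Matrix.PosSemidef.blockDiagonal' {ι 𝕜 : Type*} [RCLike 𝕜] [Fintype ι] [DecidableEq ι]
    {m : ι → Type*} [∀ i, Fintype (m i)] [∀ i, DecidableEq (m i)]
    {M : ∀ i, Matrix (m i) (m i) 𝕜} (hM : ∀ i, (M i).PosSemidef) :
    (blockDiagonal' M).PosSemidef := by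
  choose B hB using fun i => CStarAlgebra.nonneg_iff_eq_star_mul_self.mp (hM i).nonneg
  rw [funext hB, blockDiagonal'_mul]
  simp only [star_eq_conjTranspose]
  rw [← blockDiagonal'_conjTranspose]
  exact posSemidef_conjTranspose_mul_self _

lemma Matrix.blockDiagonal'_blockDiag'_of_apply_eq_zero {o α : Type*} {m : o → Type*}
    [DecidableEq o] [Zero α] {M : Matrix (Σ i, m i) (Σ i, m i) α}
    (hM : ∀ i j, i ≠ j → ∀ u v, M ⟨i, u⟩ ⟨j, v⟩ = 0) : blockDiagonal' M.blockDiag' = M := by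
  ext ⟨i, u⟩ ⟨j, v⟩
  by_cases hij : i = j
  · subst hij
    rw [blockDiagonal'_apply_eq, blockDiag'_apply]
  · rw [blockDiagonal'_apply_ne _ _ _ hij, hM i j hij]

section TraceNorm

variable {n : Type*} [Fintype n] [DecidableEq n]

lemma traceNorm_eq_trace_sqrt (X : Matrix n n ℂ) :
    (traceNorm X : ℂ) = (CFC.sqrt (Xᴴ * X)).trace := by
  have hXX := posSemidef_conjTranspose_mul_self X
  rw [CFC.sqrt_eq_cfc, cfc_nnreal_eq_real _ (Xᴴ * X), hXX.1.cfc_eq, IsHermitian.cfc,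
    Unitary.conjStarAlgAut_apply, trace_mul_cycle,
    mem_unitaryGroup_iff'.mp hXX.1.eigenvectorUnitary.2, one_mul, trace_diagonal, traceNorm]
  push_cast
  exact Finset.sum_congr rfl fun i _ => by simp [max_eq_left (hXX.eigenvalues_nonneg i)]

lemma traceNorm_eq_trace_of_mul_self_eq {X S : Matrix n n ℂ} (hS : S.PosSemidef)
    (h : S * S = Xᴴ * X) : (traceNorm X : ℂ) = S.trace := by
  rw [traceNorm_eq_trace_sqrt, CFC.sqrt_unique h hS.nonneg]

lemma traceNorm_eq_zero_iff {X : Matrix n n ℂ} : traceNorm X = 0 ↔ X = 0 := by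
  have hXX := posSemidef_conjTranspose_mul_self X
  rw [← Complex.ofReal_eq_zero, traceNorm_eq_trace_sqrt,
    (CFC.sqrt_nonneg (Xᴴ * X)).posSemidef.trace_eq_zero_iff, CFC.sqrt_eq_zero_iff _ hXX.nonneg,
    conjTranspose_mul_self_eq_zero]

lemma traceNorm_zero : traceNorm (0 : Matrix n n ℂ) = 0 :=
  traceNorm_eq_zero_iff.mpr rfl

lemma traceNorm_nonneg (X : Matrix n n ℂ) : 0 ≤ traceNorm X :=
  Finset.sum_nonneg fun _ _ => Real.sqrt_nonneg _

lemma traceNorm_pos {X : Matrix n n ℂ} (hX : X ≠ 0) : 0 < traceNorm X :=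
  (traceNorm_nonneg X).lt_of_ne' (mt traceNorm_eq_zero_iff.mp hX)

lemma traceNorm_smul (c : ℂ) (X : Matrix n n ℂ) : traceNorm (c • X) = ‖c‖ * traceNorm X := by
  set S := CFC.sqrt (Xᴴ * X)
  have hS : S.PosSemidef := (CFC.sqrt_nonneg _).posSemidef
  have hcS : (‖c‖ • S).PosSemidef := hS.smul (norm_nonneg c)
  have h : (‖c‖ • S) * (‖c‖ • S) = (c • X)ᴴ * (c • X) := by
    rw [smul_mul_smul_comm, CFC.sqrt_mul_sqrt_self _ (posSemidef_conjTranspose_mul_self X).nonneg,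
      conjTranspose_smul, smul_mul_smul_comm, ← sq, Complex.star_def, RCLike.conj_mul]
    norm_cast
  have := traceNorm_eq_trace_of_mul_self_eq hcS h
  rw [trace_smul, Complex.real_smul, ← traceNorm_eq_trace_sqrt] at this
  exact_mod_cast this

lemma traceNorm_submatrix {m : Type*} [Fintype m] [DecidableEq m] (e : m ≃ n)
    (X : Matrix n n ℂ) : traceNorm (X.submatrix e e) = traceNorm X := by
  have hS : (CFC.sqrt (Xᴴ * X)).PosSemidef := (CFC.sqrt_nonneg _).posSemidef
  have h : (CFC.sqrt (Xᴴ * X)).submatrix e e * (CFC.sqrt (Xᴴ * X)).submatrix e e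
      = (X.submatrix e e)ᴴ * X.submatrix e e := by
    rw [conjTranspose_submatrix, submatrix_mul_equiv, submatrix_mul_equiv,
      CFC.sqrt_mul_sqrt_self _ (posSemidef_conjTranspose_mul_self X).nonneg]
  have := traceNorm_eq_trace_of_mul_self_eq (hS.submatrix e) h
  rw [trace_submatrix_equiv, ← traceNorm_eq_trace_sqrt] at this
  exact_mod_cast this

end TraceNorm

section TraceNormBlock

variable {ι : Type*} [Fintype ι] [DecidableEq ι] {m : ι → Type*} [∀ i, Fintype (m i)]
  [∀ i, DecidableEq (m i)]

lemma traceNorm_blockDiagonal'_s15 (M : ∀ i, Matrix (m i) (m i) ℂ) :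
    traceNorm (blockDiagonal' M) = ∑ i, traceNorm (M i) := by
  set S := fun i => CFC.sqrt ((M i)ᴴ * M i)
  have hS : (blockDiagonal' S).PosSemidef :=
    PosSemidef.blockDiagonal' fun i => (CFC.sqrt_nonneg _).posSemidef
  have h : blockDiagonal' S * blockDiagonal' S = (blockDiagonal' M)ᴴ * blockDiagonal' M := by
    rw [blockDiagonal'_conjTranspose, ← blockDiagonal'_mul, ← blockDiagonal'_mul]
    exact congrArg _ <| funext fun i =>
      CFC.sqrt_mul_sqrt_self _ (posSemidef_conjTranspose_mul_self (M i)).nonneg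
  have := traceNorm_eq_trace_of_mul_self_eq hS h
  simp only [trace_blockDiagonal', S, ← traceNorm_eq_trace_sqrt] at this
  exact_mod_cast this

lemma traceNorm_eq_sum_blockDiag' {M : Matrix (Σ i, m i) (Σ i, m i) ℂ}
    (hM : ∀ i j, i ≠ j → ∀ u v, M ⟨i, u⟩ ⟨j, v⟩ = 0) :
    traceNorm M = ∑ i, traceNorm (M.blockDiag' i) := by
  rw [← traceNorm_blockDiagonal'_s15, blockDiagonal'_blockDiag'_of_apply_eq_zero hM]

end TraceNormBlock

def Equiv.sigmaProdSigma {I J : Type*} (α : I → Type*) (β : J → Type*) :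
    (Σ p : I × J, α p.1 × β p.2) ≃ (Σ a, α a) × (Σ b, β b) where
  toFun q := (⟨q.1.1, q.2.1⟩, ⟨q.1.2, q.2.2⟩)
  invFun P := ⟨(P.1.1, P.2.1), (P.1.2, P.2.2)⟩
  left_inv _ := rfl
  right_inv _ := rfl

theorem traceNorm_ptA_eq_sum_of_blocks {I : Type*} {HA HB : I → Type*} [Fintype I] [DecidableEq I]
    [∀ a, Fintype (HA a)] [∀ a, DecidableEq (HA a)]
    [∀ a, Fintype (HB a)] [∀ a, DecidableEq (HB a)]
    (c : I → ℂ) (ρa : ∀ a, Matrix (HA a × HB a) (HA a × HB a) ℂ)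
    (ρ : Matrix ((Σ a, HA a) × (Σ a, HB a)) ((Σ a, HA a) × (Σ a, HB a)) ℂ)
    (hblock : ∀ (a : I) (x x' : HA a) (y y' : HB a),
      ρ (⟨a, x⟩, ⟨a, y⟩) (⟨a, x'⟩, ⟨a, y'⟩) = c a * ρa a (x, y) (x', y'))
    (hoff : ∀ (a b a' b' : I) (x : HA a) (y : HB b) (x' : HA a') (y' : HB b'),
      ¬(a = b ∧ b = a' ∧ a' = b') →
      ρ (⟨a, x⟩, ⟨b, y⟩) (⟨a', x'⟩, ⟨b', y'⟩) = 0) :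
    traceNorm (ptA ρ) = ∑ a, ‖c a‖ * traceNorm (ptA (ρa a)) := by
  set e := Equiv.sigmaProdSigma HA HB
  set Y := (ptA ρ).submatrix e e
  have hY_offBlock : ∀ p q, p ≠ q → ∀ u v, Y ⟨p, u⟩ ⟨q, v⟩ = 0 := by
    rintro ⟨a, b⟩ ⟨a', b'⟩ hpq ⟨x, y⟩ ⟨x', y'⟩
    refine hoff a' b a b' x' y x y' fun ⟨h₁, h₂, h₃⟩ => hpq ?_
    subst h₁ h₂ h₃
    rfl
  have hY_diag : ∀ a, Y.blockDiag' (a, a) = c a • ptA (ρa a) := by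
    intro a
    ext ⟨x, y⟩ ⟨x', y'⟩
    exact hblock a x' x y y'
  have hY_mixed : ∀ a b, a ≠ b → Y.blockDiag' (a, b) = 0 := by
    intro a b hab
    ext ⟨x, y⟩ ⟨x', y'⟩
    exact hoff a b a b x' y x y' fun h => hab h.1
  rw [← traceNorm_submatrix e, traceNorm_eq_sum_blockDiag' hY_offBlock, Fintype.sum_prod_type]
  refine Finset.sum_congr rfl fun a _ => ?_
  rw [Fintype.sum_eq_single a fun b hb => by rw [hY_mixed a b (Ne.symm hb), traceNorm_zero],
    hY_diag, traceNorm_smul]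

theorem stmt_15_general {I : Type*} {HA HB : I → Type*} [Fintype I] [DecidableEq I]
    [∀ a, Fintype (HA a)] [∀ a, DecidableEq (HA a)]
    [∀ a, Fintype (HB a)] [∀ a, DecidableEq (HB a)]
    (ψ : I → ℂ)
    (ρa : ∀ a, Matrix (HA a × HB a) (HA a × HB a) ℂ)
    (hρa : ∀ a, IsDensityMatrix (ρa a))
    (ρ : Matrix ((Σ a, HA a) × (Σ a, HB a)) ((Σ a, HA a) × (Σ a, HB a)) ℂ)
    (hblock : ∀ (a : I) (x x' : HA a) (y y' : HB a),
      ρ (⟨a, x⟩, ⟨a, y⟩) (⟨a, x'⟩, ⟨a, y'⟩)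
        = ((‖ψ a‖ : ℂ)) ^ 2 * ρa a (x, y) (x', y'))
    (hoff : ∀ (a b a' b' : I) (x : HA a) (y : HB b) (x' : HA a') (y' : HB b'),
      ¬(a = b ∧ b = a' ∧ a' = b') →
      ρ (⟨a, x⟩, ⟨b, y⟩) (⟨a', x'⟩, ⟨b', y'⟩) = 0) :
    traceNorm (ptA ρ) = ∑ a, ‖ψ a‖ ^ 2 * traceNorm (ptA (ρa a)) ∧
    Real.log (traceNorm (ptA ρ))
      = Real.log (∑ a, ‖ψ a‖ ^ 2 *
          Real.exp (Real.log (traceNorm (ptA (ρa a))))) := by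
  have hsum : traceNorm (ptA ρ) = ∑ a, ‖ψ a‖ ^ 2 * traceNorm (ptA (ρa a)) := by
    simpa using traceNorm_ptA_eq_sum_of_blocks (fun a => (‖ψ a‖ : ℂ) ^ 2) ρa ρ hblock hoff
  have hpos : ∀ a, 0 < traceNorm (ptA (ρa a)) := fun a => traceNorm_pos fun h => by
    simpa [h] using (trace_ptA (ρa a)).trans (hρa a).2
  refine ⟨hsum, ?_⟩
  simp_rw [Real.exp_log (hpos _), hsum]

/-- For a block-diagonal state `ρ = ⊕_a |ψ_a|² ρ_a` with blocks of the form
`H_A^a ⊗ H_B^a` (realized by sigma types), the trace norm of the partial transpose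
decomposes as `‖ρ^{T_A}‖₁ = Σ_a |ψ_a|² ‖ρ_a^{T_A}‖₁`, hence
`E_{A:B}(ρ) = log Σ_a |ψ_a|² exp(E_{A:B}(ρ_a))`. -/
theorem stmt_15 {I : Type*} {HA HB : I → Type*} [Fintype I] [DecidableEq I]
    [∀ a, Fintype (HA a)] [∀ a, DecidableEq (HA a)]
    [∀ a, Fintype (HB a)] [∀ a, DecidableEq (HB a)]
    (ψ : I → ℂ) (hψ : ∑ a, ‖ψ a‖ ^ 2 = 1)
    (ρa : ∀ a, Matrix (HA a × HB a) (HA a × HB a) ℂ)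
    (hρa : ∀ a, IsDensityMatrix (ρa a))
    (ρ : Matrix ((Σ a, HA a) × (Σ a, HB a)) ((Σ a, HA a) × (Σ a, HB a)) ℂ)
    (hblock : ∀ (a : I) (x x' : HA a) (y y' : HB a),
      ρ (⟨a, x⟩, ⟨a, y⟩) (⟨a, x'⟩, ⟨a, y'⟩)
        = ((‖ψ a‖ : ℂ)) ^ 2 * ρa a (x, y) (x', y'))
    (hoff : ∀ (a b a' b' : I) (x : HA a) (y : HB b) (x' : HA a') (y' : HB b'),
      ¬(a = b ∧ b = a' ∧ a' = b') →
      ρ (⟨a, x⟩, ⟨b, y⟩) (⟨a', x'⟩, ⟨b', y'⟩) = 0) :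
    traceNorm (ptA ρ) = ∑ a, ‖ψ a‖ ^ 2 * traceNorm (ptA (ρa a)) ∧
    Real.log (traceNorm (ptA ρ))
      = Real.log (∑ a, ‖ψ a‖ ^ 2 *
          Real.exp (Real.log (traceNorm (ptA (ρa a))))) :=
  stmt_15_general ψ ρa hρa ρ hblock hoff
end
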